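/- arXiv:1201.1440 — 4 statements merged into one kernel-verified Lean document; each statement's English description precedes it below -/
import Mathlib

section
/- Let d ≥ 2, 0 < ε ≤ M, and x ∈ ℝ^d. Then ε · ∫_{ε ≤ |x−y| ≤ M} ln(|x−y|/ε + 2) / |x−y|^{d+1} dy ≤ C(d) · ln(M/ε + 2), where C(d) depends only on d. -/
/-!
In polar coordinates around `x` the integral becomes `d |B₁| ∫_ε^M r^{d-1} ln(r/ε + 2) / r^{d+1} dr`.
On `[ε, M]` the logarithm is at most `ln(M/ε + 2)`, and what remains is `∫_ε^∞ r⁻² dr = 1/ε`,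
which cancels the prefactor `ε`.
-/

open MeasureTheory Metric Bornology
open scoped ENNReal NNReal

noncomputable section

abbrev E (d : ℕ) := EuclideanSpace ℝ (Fin d)

open Set

theorem integral_fun_dist_preimage_addHaar {V F : Type*} [NormedAddCommGroup V]
    [NormedSpace ℝ V] [FiniteDimensional ℝ V] [Nontrivial V] [MeasurableSpace V] [BorelSpace V]
    [NormedAddCommGroup F] [NormedSpace ℝ F] (μ : Measure V) [μ.IsAddHaarMeasure]
    (x : V) (f : ℝ → F) {s : Set ℝ} (hs : MeasurableSet s) (hs_pos : s ⊆ Ioi 0) :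
    ∫ y in dist x ⁻¹' s, f (dist x y) ∂μ =
      Module.finrank ℝ V • μ.real (ball 0 1) • ∫ r in s, r ^ (Module.finrank ℝ V - 1) • f r := by
  have hmeas : MeasurableSet (dist x ⁻¹' s) := (continuous_const.dist continuous_id).measurable hs
  rw [← integral_indicator hmeas]
  calc ∫ y, (dist x ⁻¹' s).indicator (fun y ↦ f (dist x y)) y ∂μ
      = ∫ y, s.indicator f ‖y - x‖ ∂μ := by
        congr 1 with y
        rw [← dist_eq_norm, dist_comm]
        exact indicator_comp_right (g := f) (dist x)
    _ = ∫ y, s.indicator f ‖y‖ ∂μ := integral_sub_right_eq_self (fun y ↦ s.indicator f ‖y‖) x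
    _ = _ := by
        rw [integral_fun_norm_addHaar, ← indicator_smul s (fun r ↦ r ^ (Module.finrank ℝ V - 1)) f,
          setIntegral_indicator hs, inter_eq_right.mpr hs_pos]

theorem pow_pred_div_rpow_succ {r : ℝ} (hr : 0 < r) {d : ℕ} (hd : 1 ≤ d) :
    r ^ (d - 1) / r ^ ((d : ℝ) + 1) = r ^ (-2 : ℝ) := by
  rw [← Real.rpow_natCast, Nat.cast_sub hd, ← Real.rpow_sub hr]
  ring_nf

theorem integral_Icc_pow_mul_log_div_rpow_le {d : ℕ} (hd : 1 ≤ d) {ε M : ℝ} (hε : 0 < ε)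
    (hεM : ε ≤ M) :
    ∫ r in Icc ε M, r ^ (d - 1) * (Real.log (r / ε + 2) / r ^ ((d : ℝ) + 1)) ≤
      Real.log (M / ε + 2) / ε := by
  set L := Real.log (M / ε + 2)
  have hlog_nonneg : ∀ r, 0 ≤ r → 0 ≤ Real.log (r / ε + 2) := fun r hr ↦
    Real.log_nonneg (by linarith [div_nonneg hr hε.le])
  have hpointwise : ∀ r ∈ Icc ε M,
      r ^ (d - 1) * (Real.log (r / ε + 2) / r ^ ((d : ℝ) + 1)) ≤ L * r ^ (-2 : ℝ) := by
    rintro r ⟨hεr, hrM⟩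
    have hr : 0 < r := hε.trans_le hεr
    have hlog_le : Real.log (r / ε + 2) ≤ L := Real.log_le_log (by positivity) (by gcongr)
    calc r ^ (d - 1) * (Real.log (r / ε + 2) / r ^ ((d : ℝ) + 1))
        = Real.log (r / ε + 2) * r ^ (-2 : ℝ) := by
          rw [← pow_pred_div_rpow_succ hr hd]; ring
      _ ≤ L * r ^ (-2 : ℝ) := by gcongr
  have hint : IntegrableOn (fun r : ℝ ↦ L * r ^ (-2 : ℝ)) (Ici ε) :=
    (integrableOn_Ici_iff_integrableOn_Ioi).mpr
      ((integrableOn_Ioi_rpow_of_lt (by norm_num) hε).const_mul L)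
  calc ∫ r in Icc ε M, r ^ (d - 1) * (Real.log (r / ε + 2) / r ^ ((d : ℝ) + 1))
      ≤ ∫ r in Icc ε M, L * r ^ (-2 : ℝ) := by
        refine integral_mono_of_nonneg ?_ (hint.mono_set Icc_subset_Ici_self) ?_
        · filter_upwards [ae_restrict_mem measurableSet_Icc] with r hr
          have hr0 : 0 ≤ r := hε.le.trans hr.1
          exact mul_nonneg (pow_nonneg hr0 _)
            (div_nonneg (hlog_nonneg r hr0) (Real.rpow_nonneg hr0 _))
        · filter_upwards [ae_restrict_mem measurableSet_Icc] with r hr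
          exact hpointwise r hr
    _ ≤ ∫ r in Ici ε, L * r ^ (-2 : ℝ) := by
        refine setIntegral_mono_set hint ?_ Icc_subset_Ici_self.eventuallyLE
        filter_upwards [ae_restrict_mem measurableSet_Ici] with r hr
        exact mul_nonneg (hlog_nonneg M (hε.le.trans hεM)) (Real.rpow_nonneg (hε.le.trans hr) _)
    _ = L / ε := by
        rw [integral_Ici_eq_integral_Ioi, integral_const_mul,
          integral_Ioi_rpow_of_lt (by norm_num) hε]
        norm_num [Real.rpow_neg_one, div_eq_mul_inv]

/-- For d ≥ 2 and 0 < ε ≤ M,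
ε · ∫_{ε ≤ |x−y| ≤ M} ln(|x−y|/ε + 2)/|x−y|^{d+1} dy ≤ C(d)·ln(M/ε + 2). -/
theorem stmt_3 (d : ℕ) (hd : 2 ≤ d) :
    ∃ C : ℝ, 0 < C ∧ ∀ (x : E d) (ε M : ℝ), 0 < ε → ε ≤ M →
      ε * (∫ y in {y : E d | ε ≤ dist x y ∧ dist x y ≤ M},
            Real.log (dist x y / ε + 2) / (dist x y) ^ ((d : ℝ) + 1))
        ≤ C * Real.log (M / ε + 2) := by
  have : Nonempty (Fin d) := ⟨⟨0, by omega⟩⟩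
  set v := (volume : Measure (E d)).real (ball 0 1)
  have hv : 0 < v := ENNReal.toReal_pos (measure_ball_pos _ _ one_pos).ne' measure_ball_lt_top.ne
  refine ⟨d * v, by positivity, fun x ε M hε hεM ↦ ?_⟩
  set L := Real.log (M / ε + 2)
  calc ε * ∫ y in dist x ⁻¹' Icc ε M, Real.log (dist x y / ε + 2) / dist x y ^ ((d : ℝ) + 1)
      = ε * (d * v * ∫ r in Icc ε M,
          r ^ (d - 1) * (Real.log (r / ε + 2) / r ^ ((d : ℝ) + 1))) := by
        rw [integral_fun_dist_preimage_addHaar volume x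
            (fun r ↦ Real.log (r / ε + 2) / r ^ ((d : ℝ) + 1)) measurableSet_Icc
            fun r hr ↦ hε.trans_le hr.1,
          finrank_euclideanSpace_fin, nsmul_eq_mul, smul_eq_mul, mul_assoc]
        rfl
    _ ≤ ε * (d * v * (L / ε)) := by
        gcongr
        exact integral_Icc_pow_mul_log_div_rpow_le (by omega) hε hεM
    _ = d * v * L := by field_simp
end
end

section
/- Let Ω ⊂ ℝ^d (d ≥ 2) be a bounded measurable set of diameter at most M, and let 0 < ε ≤ M. Define the kernel K_ε(x,y) = ε·|x−y|^{−d}·ln(|x−y|/ε + 2) if |x−y| ≥ ε, and K_ε(x,y) = |x−y|^{1−d} if 0 < |x−y| < ε. Then sup_{x∈Ω} ∫_Ω K_ε(x,y) dy ≤ C(d) · ε · (ln(M/ε + 2))², where C(d) depends only on d. -/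
/-!
Since `Ω ⊆ closedBall x M`, the logarithm in `K_ε(x, y)` is at most `L = ln (M/ε + 2)`, and it
suffices to integrate the radial kernel over the ball. In polar coordinates the Jacobian `r^(d-1)`
turns the kernel into `1` on `(0, ε)` and into at most `ε L / r` on `[ε, M]`, so the radial
integral is at most `ε + ε L ln (M/ε) ≤ 2 ε L²`. Hence `C(d) = 2 d |B(0,1)|` works.
-/

open MeasureTheory Metric Bornology
open scoped ENNReal NNReal

noncomputable section

open Set

/-- `K_ε(x, y) = logKernel d ε |x - y|`. -/
def logKernel (d : ℕ) (ε r : ℝ) : ℝ :=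
  if ε ≤ r then ε * r ^ (-(d : ℝ)) * Real.log (r / ε + 2) else r ^ (1 - (d : ℝ))

section LogKernel

variable {d : ℕ} {ε r : ℝ}

theorem logKernel_nonneg (hε : 0 < ε) (hr : 0 ≤ r) : 0 ≤ logKernel d ε r := by
  unfold logKernel
  split_ifs
  · have : 0 ≤ Real.log (r / ε + 2) := Real.log_nonneg (by linarith [div_nonneg hr hε.le])
    positivity
  · positivity

theorem measurable_logKernel (d : ℕ) (ε : ℝ) : Measurable (logKernel d ε) :=
  Measurable.ite (measurableSet_Ici (a := ε))
    ((measurable_const.mul (measurable_id.pow_const _)).mul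
      ((measurable_id.div_const ε).add_const 2).log)
    (measurable_id.pow_const _)

theorem pow_mul_logKernel_of_lt (hd : 1 ≤ d) (hr : 0 < r) (hrε : r < ε) :
    r ^ (d - 1) * logKernel d ε r = 1 := by
  rw [logKernel, if_neg hrε.not_ge, ← Real.rpow_natCast, Nat.cast_sub hd, Nat.cast_one,
    ← Real.rpow_add hr]
  simp

theorem pow_mul_logKernel_of_le (hd : 1 ≤ d) (hr : 0 < r) (hεr : ε ≤ r) :
    r ^ (d - 1) * logKernel d ε r = ε * Real.log (r / ε + 2) * r⁻¹ := by
  rw [logKernel, if_pos hεr, ← Real.rpow_natCast, Nat.cast_sub hd, Nat.cast_one,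
    ← Real.rpow_neg_one, mul_comm ε, mul_assoc, mul_assoc, ← mul_assoc (r ^ _), ← Real.rpow_add hr]
  ring_nf

end LogKernel

theorem lintegral_pow_mul_logKernel_le {d : ℕ} (hd : 1 ≤ d) {ε M : ℝ} (hε : 0 < ε)
    (hεM : ε ≤ M) :
    ∫⁻ r in Ioc 0 M, ENNReal.ofReal (r ^ (d - 1)) * ENNReal.ofReal (logKernel d ε r)
      ≤ ENNReal.ofReal (2 * ε * Real.log (M / ε + 2) ^ 2) := by
  set L := Real.log (M / ε + 2)
  have hM : 0 < M := hε.trans_le hεM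
  have hL : 1 ≤ L := by
    rw [Real.le_log_iff_exp_le (by positivity)]
    linarith [(one_le_div hε).2 hεM, Real.exp_one_lt_d9]
  have hlogM : Real.log (M / ε) ≤ L := Real.log_le_log (by positivity) (by linarith)
  have h_near : ∫⁻ r in Ioo 0 ε, ENNReal.ofReal (r ^ (d - 1)) *
      ENNReal.ofReal (logKernel d ε r) = ENNReal.ofReal ε := by
    rw [setLIntegral_congr_fun measurableSet_Ioo fun r hr => by
      rw [← ENNReal.ofReal_mul (pow_nonneg hr.1.le _), pow_mul_logKernel_of_lt hd hr.1 hr.2,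
        ENNReal.ofReal_one]]
    simp [Real.volume_Ioo]
  have h_far : ∫⁻ r in Icc ε M, ENNReal.ofReal (r ^ (d - 1)) *
      ENNReal.ofReal (logKernel d ε r) ≤ ENNReal.ofReal (ε * L * Real.log (M / ε)) := by
    have hint : IntegrableOn (fun r : ℝ => ε * L * r⁻¹) (Icc ε M) :=
      (continuousOn_const.mul (continuousOn_inv₀.mono fun r hr =>
        (hε.trans_le hr.1).ne')).integrableOn_compact isCompact_Icc
    calc _ ≤ ∫⁻ r in Icc ε M, ENNReal.ofReal (ε * L * r⁻¹) :=
          setLIntegral_mono (by fun_prop) fun r hr => by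
            have hr0 : 0 < r := hε.trans_le hr.1
            rw [← ENNReal.ofReal_mul (pow_nonneg hr0.le _), pow_mul_logKernel_of_le hd hr0 hr.1]
            gcongr
            exact Real.log_le_log (by positivity) (by gcongr; exact hr.2)
      _ = ENNReal.ofReal (∫ r in Icc ε M, ε * L * r⁻¹) :=
          (ofReal_integral_eq_lintegral_ofReal hint (ae_restrict_of_forall_mem measurableSet_Icc
            fun r hr => by have := hε.trans_le hr.1; positivity)).symm
      _ = _ := by
          rw [integral_const_mul, integral_Icc_eq_integral_Ioc,
            ← intervalIntegral.integral_of_le hεM, integral_inv_of_pos hε hM]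
  calc _ ≤ ENNReal.ofReal ε + ENNReal.ofReal (ε * L * Real.log (M / ε)) := by
        rw [← Ioo_union_Icc_eq_Ioc hε hεM]
        exact (lintegral_union_le _ _ _).trans (add_le_add h_near.le h_far)
    _ ≤ ENNReal.ofReal (2 * ε * L ^ 2) := by
        have hlog0 : 0 ≤ Real.log (M / ε) := Real.log_nonneg ((one_le_div hε).2 hεM)
        rw [← ENNReal.ofReal_add hε.le (mul_nonneg (by positivity) hlog0)]
        gcongr
        nlinarith [mul_le_mul_of_nonneg_left hlogM (by positivity : 0 ≤ ε * L),
          mul_le_mul_of_nonneg_left (one_le_pow₀ hL : 1 ≤ L ^ 2) hε.le]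

section Polar

variable {V : Type*} [NormedAddCommGroup V] [NormedSpace ℝ V] [MeasurableSpace V] [BorelSpace V]
  [FiniteDimensional ℝ V] [Nontrivial V] (μ : Measure V) [μ.IsAddHaarMeasure]

theorem lintegral_fun_norm_addHaar {G : ℝ → ℝ≥0∞} (hG : Measurable G) :
    ∫⁻ x, G ‖x‖ ∂μ = Module.finrank ℝ V * μ (ball 0 1) *
      ∫⁻ r in Ioi (0 : ℝ), ENNReal.ofReal (r ^ (Module.finrank ℝ V - 1)) * G r := by
  have hG' : Measurable fun r : Ioi (0 : ℝ) => G r := hG.comp measurable_subtype_coe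
  calc
    ∫⁻ x, G ‖x‖ ∂μ = ∫⁻ x : ({0}ᶜ : Set V), G ‖(x : V)‖ ∂(μ.comap Subtype.val) := by
      rw [lintegral_subtype_comap (measurableSet_singleton _).compl (fun x => G ‖x‖),
        restrict_compl_singleton]
    _ = ∫⁻ z : sphere (0 : V) 1 × Ioi (0 : ℝ), G z.2
          ∂(μ.toSphere.prod (.volumeIoiPow (Module.finrank ℝ V - 1))) := by
      rw [← μ.measurePreserving_homeomorphUnitSphereProd.lintegral_comp_emb
        (Homeomorph.measurableEmbedding _) (fun z => G z.2)]
      simp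
    _ = μ.toSphere univ * ∫⁻ r : Ioi (0 : ℝ), G r
          ∂(Measure.volumeIoiPow (Module.finrank ℝ V - 1)) := by
      rw [← lintegral_map hG' measurable_snd, Measure.map_snd_prod, lintegral_smul_measure,
        smul_eq_mul]
    _ = _ := by
      rw [Measure.toSphere_apply_univ, Measure.volumeIoiPow,
        lintegral_withDensity_eq_lintegral_mul _
          (measurable_subtype_coe.pow_const _).ennreal_ofReal hG',
        ← lintegral_subtype_comap measurableSet_Ioi
          (fun r : ℝ => ENNReal.ofReal (r ^ (Module.finrank ℝ V - 1)) * G r)]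
      rfl

theorem setLIntegral_closedBall_fun_dist (x : V) (R : ℝ) {G : ℝ → ℝ≥0∞} (hG : Measurable G) :
    ∫⁻ y in closedBall x R, G (dist x y) ∂μ = Module.finrank ℝ V * μ (ball 0 1) *
      ∫⁻ r in Ioc 0 R, ENNReal.ofReal (r ^ (Module.finrank ℝ V - 1)) * G r := by
  have hG' : Measurable ((Iic R).indicator G) := hG.indicator measurableSet_Iic
  calc ∫⁻ y in closedBall x R, G (dist x y) ∂μ
      = ∫⁻ y, (Iic R).indicator G ‖y + -x‖ ∂μ := by
        rw [← lintegral_indicator measurableSet_closedBall]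
        congr 1 with y
        have hxy : dist x y = ‖y + -x‖ := by rw [dist_comm, dist_eq_norm, sub_eq_add_neg]
        by_cases h : ‖y + -x‖ ≤ R <;> simp [indicator, mem_closedBall, dist_comm y x, hxy, h]
    _ = ∫⁻ z, (Iic R).indicator G ‖z‖ ∂μ :=
        lintegral_add_right_eq_self (fun z => (Iic R).indicator G ‖z‖) (-x)
    _ = _ := by
      rw [lintegral_fun_norm_addHaar μ hG', ← Ioi_inter_Iic, inter_comm,
        ← Measure.restrict_restrict measurableSet_Iic, ← lintegral_indicator measurableSet_Iic]
      congr 2 with r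
      by_cases hr : r ∈ Iic R <;> simp [hr]

theorem setLIntegral_logKernel_dist_le {Ω : Set V} {x : V} {ε M : ℝ} (hε : 0 < ε)
    (hεM : ε ≤ M) (hΩ : Ω ⊆ closedBall x M) :
    ∫⁻ y in Ω, ENNReal.ofReal (logKernel (Module.finrank ℝ V) ε (dist x y)) ∂μ
      ≤ Module.finrank ℝ V * μ (ball 0 1) * ENNReal.ofReal (2 * ε * Real.log (M / ε + 2) ^ 2) := by
  grw [lintegral_mono_set hΩ,
    setLIntegral_closedBall_fun_dist μ x M (measurable_logKernel _ ε).ennreal_ofReal,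
    lintegral_pow_mul_logKernel_le Module.finrank_pos hε hεM]

end Polar

/-- Bound for the kernel K_ε:
sup_{x∈Ω} ∫_Ω K_ε(x,y) dy ≤ C(d)·ε·(ln(M/ε+2))², where K_ε(x,y) is
ε·|x−y|^{−d}·ln(|x−y|/ε+2) for |x−y| ≥ ε and |x−y|^{1−d} for |x−y| < ε. -/
theorem stmt_4 (d : ℕ) (hd : 2 ≤ d) :
    ∃ C : ℝ, 0 < C ∧ ∀ (Ω : Set (E d)) (M ε : ℝ),
      MeasurableSet Ω → IsBounded Ω → Metric.diam Ω ≤ M → 0 < ε → ε ≤ M →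
      ∀ x ∈ Ω,
        (∫ y in Ω,
          (if ε ≤ dist x y then
            ε * (dist x y) ^ (-(d : ℝ)) * Real.log (dist x y / ε + 2)
          else (dist x y) ^ (1 - (d : ℝ))))
          ≤ C * ε * (Real.log (M / ε + 2)) ^ 2 := by
  have hdim : Module.finrank ℝ (E d) = d := finrank_euclideanSpace_fin
  have : Nontrivial (E d) := Module.nontrivial_of_finrank_pos (R := ℝ) (by omega)
  have hball : 0 < volume.real (ball (0 : E d) 1) :=
    ENNReal.toReal_pos (measure_ball_pos _ _ one_pos).ne' measure_ball_lt_top.ne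
  refine ⟨2 * d * volume.real (ball (0 : E d) 1), by positivity, ?_⟩
  intro Ω M ε _ hΩ hdiam hε hεM x hx
  have hsub : Ω ⊆ closedBall x M := fun y hy =>
    mem_closedBall.2 ((dist_le_diam_of_mem hΩ hy hx).trans hdiam)
  have hbound := setLIntegral_logKernel_dist_le volume hε hεM hsub
  rw [hdim] at hbound
  change ∫ y in Ω, logKernel d ε (dist x y) ≤ _
  rw [integral_eq_lintegral_of_nonneg_ae (f := fun y => logKernel d ε (dist x y))
    (ae_of_all _ fun y => logKernel_nonneg hε dist_nonneg)
    ((measurable_logKernel d ε).comp (measurable_const.dist measurable_id)).aestronglyMeasurable]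
  refine (ENNReal.toReal_mono (by finiteness) hbound).trans_eq ?_
  rw [ENNReal.toReal_mul, ENNReal.toReal_mul, ENNReal.toReal_natCast,
    ENNReal.toReal_ofReal (by positivity), ← measureReal_def]
  ring
end
end

section
/- Let Ω ⊂ ℝ^d be a bounded convex open set with diameter M, let 0 < ε ≤ M, and let H : Ω → ℝ^m be differentiable with |∇H(x)| ≤ C₀·min{1, ε/dist(x, ∂Ω)} for all x ∈ Ω. Then for all x, y ∈ Ω, |H(x) − H(y)| ≤ C·ε·ln(M/ε + 2), where C depends only on d, m, C₀, and Ω. -/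
open MeasureTheory Metric Bornology
open scoped ENNReal NNReal

noncomputable section

/-!
Fix a ball `B(z, r) ⊆ Ω`. By convexity, the point at parameter `t` of the segment from `w ∈ Ω`
to `z` is the centre of a ball of radius `t r` inside `Ω`, so along that segment the derivative
of `H` is at most `C₀ |z - w| · 2ε / (ε + t r)`. Integrating in `t` gives
`|H z - H w| ≤ 2 C₀ (diam Ω) (ε / r) ln (1 + r / ε)`, and passing through `z` bounds the
oscillation of `H`; taking `r ≤ diam Ω` turns `ln (1 + r / ε)` into `ln (M / ε + 2)`.
-/

open Set AffineMap

theorem IsOpen.le_infDist_frontier {X : Type*} [MetricSpace X] {s : Set X} (hs : IsOpen s)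
    (hfr : (frontier s).Nonempty) {x : X} {r : ℝ} (h : ball x r ⊆ s) :
    r ≤ infDist x (frontier s) := by
  by_contra! hlt
  obtain ⟨y, hy, hxy⟩ := (infDist_lt_iff hfr).1 hlt
  rw [hs.frontier_eq] at hy
  exact hy.2 (h (mem_ball'.2 hxy))

theorem min_one_div_le_two_mul_div_add {ε ρ δ : ℝ} (hε : 0 < ε) (hρ : 0 ≤ ρ) (hδ : ρ ≤ δ) :
    min 1 (ε / δ) ≤ 2 * ε / (ε + ρ) := by
  rcases le_or_gt ρ ε with hρε | hερ
  · refine (min_le_left _ _).trans ?_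
    rw [le_div_iff₀ (by linarith)]
    linarith
  · have hρ0 : 0 < ρ := hε.trans hερ
    calc min 1 (ε / δ) ≤ ε / ρ :=
          (min_le_right _ _).trans (div_le_div_of_nonneg_left hε.le hρ0 hδ)
      _ ≤ 2 * ε / (ε + ρ) := by
        rw [div_le_div_iff₀ hρ0 (by linarith)]
        nlinarith

section NormedSpace

variable {F G : Type*} [NormedAddCommGroup F] [NormedSpace ℝ F]
  [NormedAddCommGroup G] [NormedSpace ℝ G]

theorem Bornology.IsBounded.nonempty_frontier [Nontrivial F] {s : Set F} (hb : IsBounded s)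
    (hne : s.Nonempty) : (frontier s).Nonempty :=
  nonempty_frontier_iff.2 ⟨hne, fun h => NormedSpace.unbounded_univ ℝ F (h ▸ hb)⟩

theorem Convex.ball_lineMap_subset {s : Set F} (hs : Convex ℝ s) {w z : F} {r t : ℝ}
    (hw : w ∈ s) (hz : ball z r ⊆ s) (ht : t ∈ Icc (0 : ℝ) 1) :
    ball (lineMap w z t) (t * r) ⊆ s := by
  intro u hu
  have ht0 : 0 < t := ht.1.lt_of_ne <| by rintro rfl; simp at hu
  set v := z + t⁻¹ • (u - lineMap w z t)
  have hv : v ∈ ball z r := by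
    rwa [mem_ball, dist_eq_norm, add_sub_cancel_left, norm_smul, norm_inv,
      Real.norm_of_nonneg ht0.le, inv_mul_lt_iff₀ ht0, ← dist_eq_norm]
  have hvu : lineMap w v t = u := by
    simp only [v, lineMap_apply_module']
    match_scalars <;> field_simp <;> ring
  exact hvu ▸ hs.lineMap_mem hw (hz hv) ht

theorem norm_sub_le_mul_log_of_norm_deriv_le {f f' : ℝ → G} {K c ρ : ℝ} (hc : 0 < c)
    (hρ : 0 < ρ) (hf : ∀ t ∈ Icc (0 : ℝ) 1, HasDerivAt f (f' t) t)
    (hbound : ∀ t ∈ Ico (0 : ℝ) 1, ‖f' t‖ ≤ K / (c + t * ρ)) :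
    ‖f 1 - f 0‖ ≤ K / ρ * Real.log (1 + ρ / c) := by
  set B : ℝ → ℝ := fun t => K / ρ * (Real.log (c + t * ρ) - Real.log c)
  have hB : ∀ t ∈ Icc (0 : ℝ) 1, HasDerivAt B (K / (c + t * ρ)) t := by
    intro t ht
    have hpos : 0 < c + t * ρ := by have := ht.1; positivity
    refine (((((hasDerivAt_id' t).mul_const ρ).const_add c).log hpos.ne').sub_const
      (Real.log c) |>.const_mul (K / ρ)).congr_deriv ?_
    field_simp
  have hfB := image_norm_le_of_norm_deriv_right_le_deriv_boundary' (f := fun t => f t - f 0)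
    (fun t ht => ((hf t ht).sub_const _).continuousAt.continuousWithinAt)
    (fun t ht => ((hf t (Ico_subset_Icc_self ht)).sub_const _).hasDerivWithinAt)
    (by simp [B]) (fun t ht => (hB t ht).continuousAt.continuousWithinAt)
    (fun t ht => (hB t (Ico_subset_Icc_self ht)).hasDerivWithinAt) hbound
    (right_mem_Icc.2 zero_le_one)
  refine hfB.trans_eq ?_
  simp only [B]
  rw [one_mul, ← Real.log_div (by positivity) hc.ne']
  congr 2
  field_simp

theorem norm_sub_le_of_norm_fderiv_le_min_infDist {Ω : Set F} (hΩo : IsOpen Ω)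
    (hΩc : Convex ℝ Ω) (hfr : (frontier Ω).Nonempty) {H : F → G} {C₀ ε r : ℝ} (hC₀ : 0 ≤ C₀)
    (hε : 0 < ε) (hr : 0 < r) (hdiff : ∀ x ∈ Ω, DifferentiableAt ℝ H x)
    (hbound : ∀ x ∈ Ω, ‖fderiv ℝ H x‖ ≤ C₀ * min 1 (ε / infDist x (frontier Ω)))
    {w z : F} (hw : w ∈ Ω) (hz : ball z r ⊆ Ω) :
    ‖H z - H w‖ ≤ 2 * C₀ * ‖z - w‖ * ε / r * Real.log (1 + r / ε) := by
  have hγ : ∀ t ∈ Icc (0 : ℝ) 1, lineMap w z t ∈ Ω := fun t ht =>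
    hΩc.lineMap_mem hw (hz (mem_ball_self hr)) ht
  have key := norm_sub_le_mul_log_of_norm_deriv_le (f := H ∘ lineMap w z)
    (f' := fun t => fderiv ℝ H (lineMap w z t) (z - w)) (K := 2 * C₀ * ‖z - w‖ * ε) hε hr
    (fun t ht => (hdiff _ (hγ t ht)).hasFDerivAt.comp_hasDerivAt t hasDerivAt_lineMap)
    (fun t ht => ?_)
  · simpa using key
  have ht' : t ∈ Icc (0 : ℝ) 1 := Ico_subset_Icc_self ht
  have hdist : t * r ≤ infDist (lineMap w z t) (frontier Ω) :=
    hΩo.le_infDist_frontier hfr (hΩc.ball_lineMap_subset hw hz ht')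
  calc ‖fderiv ℝ H (lineMap w z t) (z - w)‖
      ≤ ‖fderiv ℝ H (lineMap w z t)‖ * ‖z - w‖ := (fderiv ℝ H _).le_opNorm _
    _ ≤ C₀ * min 1 (ε / infDist (lineMap w z t) (frontier Ω)) * ‖z - w‖ := by
        gcongr; exact hbound _ (hγ t ht')
    _ ≤ C₀ * (2 * ε / (ε + t * r)) * ‖z - w‖ := by
        gcongr
        exact min_one_div_le_two_mul_div_add hε (mul_nonneg ht.1 hr.le) hdist
    _ = 2 * C₀ * ‖z - w‖ * ε / (ε + t * r) := by ring

theorem norm_sub_le_of_ball_subset {Ω : Set F} (hΩo : IsOpen Ω) (hΩc : Convex ℝ Ω)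
    (hΩb : IsBounded Ω) (hfr : (frontier Ω).Nonempty) {H : F → G} {C₀ ε r : ℝ} (hC₀ : 0 ≤ C₀)
    (hε : 0 < ε) (hr : 0 < r) (hdiff : ∀ x ∈ Ω, DifferentiableAt ℝ H x)
    (hbound : ∀ x ∈ Ω, ‖fderiv ℝ H x‖ ≤ C₀ * min 1 (ε / infDist x (frontier Ω)))
    {z : F} (hz : ball z r ⊆ Ω) {x y : F} (hx : x ∈ Ω) (hy : y ∈ Ω) :
    ‖H x - H y‖ ≤ 4 * C₀ * diam Ω * ε / r * Real.log (1 + r / ε) := by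
  have hzΩ : z ∈ Ω := hz (mem_ball_self hr)
  have hlog : 0 ≤ Real.log (1 + r / ε) := Real.log_nonneg (by have := div_pos hr hε; linarith)
  have hcenter : ∀ w ∈ Ω, ‖H z - H w‖ ≤ 2 * C₀ * diam Ω * ε / r * Real.log (1 + r / ε) := by
    intro w hw
    refine (norm_sub_le_of_norm_fderiv_le_min_infDist hΩo hΩc hfr hC₀ hε hr hdiff hbound hw
      hz).trans ?_
    gcongr
    rw [← dist_eq_norm]
    exact dist_le_diam_of_mem hΩb hzΩ hw
  calc ‖H x - H y‖ ≤ ‖H z - H x‖ + ‖H z - H y‖ := by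
        simpa only [norm_sub_rev (H x)] using norm_sub_le_norm_sub_add_norm_sub (H x) (H z) (H y)
    _ ≤ _ := (add_le_add (hcenter x hx) (hcenter y hy)).trans_eq (by ring)

end NormedSpace

/-- If H is differentiable on a bounded convex open Ω with
|∇H(x)| ≤ C₀ min{1, ε/dist(x,∂Ω)}, then |H(x) − H(y)| ≤ C ε ln(M/ε + 2). -/
theorem stmt_7 (d m : ℕ) (C₀ : ℝ) (hC₀ : 0 < C₀) (Ω : Set (E d))
    (hΩo : IsOpen Ω) (hΩc : Convex ℝ Ω) (hΩb : IsBounded Ω) (hne : Ω.Nonempty) :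
    ∃ C : ℝ, 0 < C ∧ ∀ (M ε : ℝ) (H : E d → E m),
      Metric.diam Ω = M → 0 < ε → ε ≤ M →
      (∀ x ∈ Ω, DifferentiableAt ℝ H x) →
      (∀ x ∈ Ω, ‖fderiv ℝ H x‖ ≤ C₀ * min 1 (ε / infDist x (frontier Ω))) →
      ∀ x ∈ Ω, ∀ y ∈ Ω, ‖H x - H y‖ ≤ C * ε * Real.log (M / ε + 2) := by
  obtain ⟨z, hz⟩ := hne
  obtain ⟨r, hr, hball⟩ := isOpen_iff.1 hΩo z hz
  set D := diam Ω
  set ρ := min r D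
  have hρ : 0 ≤ ρ := le_min hr.le diam_nonneg
  refine ⟨4 * C₀ * D / ρ + 1, by positivity, ?_⟩
  rintro M ε H rfl hε hεD hdiff hbound x hx y hy
  have hD : 0 < D := hε.trans_le hεD
  have : Nontrivial (E d) := nontrivial_of_nontrivial <|
    not_subsingleton_iff.1 fun h => hD.ne' (diam_subsingleton h)
  have hosc := norm_sub_le_of_ball_subset hΩo hΩc hΩb (hΩb.nonempty_frontier ⟨z, hz⟩) hC₀.le hε
    (lt_min hr hD) hdiff hbound ((ball_subset_ball (min_le_left r D)).trans hball) hx hy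
  have hlog : Real.log (1 + ρ / ε) ≤ Real.log (D / ε + 2) := by
    have : ρ / ε ≤ D / ε := by gcongr; exact min_le_right r D
    exact Real.log_le_log (by positivity) (by linarith)
  calc ‖H x - H y‖ ≤ 4 * C₀ * D / ρ * ε * Real.log (1 + ρ / ε) := hosc.trans_eq (by ring)
    _ ≤ (4 * C₀ * D / ρ + 1) * ε * Real.log (D / ε + 2) := by
        gcongr
        · exact Real.log_nonneg (by have := div_nonneg hρ hε.le; linarith)
        · linarith
end
end

section
/- Let Ω ⊂ ℝ^d be a bounded domain with diameter M, and suppose S_ε is an integral operator on Ω with kernel K_ε satisfying |K_ε(x,y)| ≤ C₀ min{|x−y|^{−d}, ε·|x−y|^{−d−1}·ln(|x−y|/ε + 2)} and S_ε(1) = 0 (i.e., p.v. ∫_Ω K_ε(x,y) dy = 0 for a.e. x). Then for every g ∈ C¹(ℝ^d) and 0 < ε < 1/2, ‖S_ε(g)‖_{L^∞(Ω)} ≤ C·√ε·|ln ε|·‖g‖_{C¹(Ω)}, where C depends only on d, C₀ and M. -/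
/-!
Since `g` is `B`-Lipschitz and bounded by `B`, the integrand `K(x,y)(g(y) - g(x))` is at most
`C₀ B |y-x|^(1-d)` inside the ball of radius `r = √ε` around `x`, and at most
`2 C₀ B ε L |y-x|^(-d-1)` outside it, where `L = log (M + 2) + |log ε|` bounds the logarithm
on `Ω`. In polar coordinates the two pieces integrate to `d |B₁| C₀ B r` and
`2 d |B₁| C₀ B ε L / r`, with `|B₁|` the volume of the unit ball; the choice `r = √ε` makes
both of order `√ε |log ε|`.
-/

open MeasureTheory Metric Bornology
open scoped ENNReal NNReal BigOperators

noncomputable section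

open Set

theorem Real.rpow_pred_mul_rpow_neg {n : ℕ} (hn : 0 < n) {t : ℝ} (ht : 0 < t) (s : ℝ) :
    t ^ (n - 1) * t ^ (-s) = t ^ ((n : ℝ) - 1 - s) := by
  rw [← Real.rpow_natCast, Nat.cast_pred hn, ← Real.rpow_add ht]
  ring_nf

theorem Real.log_div_add_two_le {t ε : ℝ} (ht : 0 ≤ t) (hε : 0 < ε) (hε1 : ε ≤ 1) :
    Real.log (t / ε + 2) ≤ Real.log (t + 2) + |Real.log ε| := by
  have h2 : 2 ≤ 2 / ε := by rw [le_div_iff₀ hε]; linarith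
  calc Real.log (t / ε + 2) ≤ Real.log ((t + 2) / ε) := by
        gcongr
        rw [add_div]
        linarith
    _ = Real.log (t + 2) + |Real.log ε| := by
        rw [Real.log_div (by linarith) hε.ne', abs_of_nonpos (Real.log_nonpos hε.le hε1)]
        ring

theorem Real.log_two_le_abs_log {ε : ℝ} (hε : 0 < ε) (hε2 : ε ≤ 1 / 2) :
    Real.log 2 ≤ |Real.log ε| := by
  rw [abs_of_nonpos (Real.log_nonpos hε.le (by linarith)), ← Real.log_inv]
  exact Real.log_le_log two_pos (by rw [le_inv_comm₀ two_pos hε]; linarith)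

theorem Real.one_add_two_mul_log_add_abs_log_le {M ε : ℝ} (hM : 0 ≤ M) (hε : 0 < ε)
    (hε2 : ε ≤ 1 / 2) :
    1 + 2 * (Real.log (M + 2) + |Real.log ε|)
      ≤ ((1 + 2 * Real.log (M + 2)) / Real.log 2 + 2) * |Real.log ε| := by
  have hA := Real.log_two_le_abs_log hε hε2
  have hlogM : 0 ≤ Real.log (M + 2) := Real.log_nonneg (by linarith)
  have : 1 + 2 * Real.log (M + 2) ≤ (1 + 2 * Real.log (M + 2)) / Real.log 2 * |Real.log ε| := by
    rw [div_mul_eq_mul_div, le_div_iff₀ (Real.log_pos one_lt_two)]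
    gcongr
  linarith

namespace MeasureTheory

variable {F : Type*} [NormedAddCommGroup F] [NormedSpace ℝ F] [FiniteDimensional ℝ F]
  [MeasurableSpace F] [BorelSpace F] [Nontrivial F] {μ : Measure F} [μ.IsAddHaarMeasure]

local notation "dim" => (Module.finrank ℝ F : ℝ)

theorem setIntegral_preimage_norm (f : ℝ → ℝ) {T : Set ℝ} (hT : MeasurableSet T) :
    ∫ x in norm ⁻¹' T, f ‖x‖ ∂μ =
      dim * μ.real (ball 0 1) * ∫ t in Ioi 0 ∩ T, t ^ (Module.finrank ℝ F - 1) * f t := by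
  rw [← integral_indicator (measurable_norm hT)]
  simp_rw [← Function.comp_apply (f := f) (g := norm), indicator_comp_right]
  rw [integral_fun_norm_addHaar μ (T.indicator f), ← setIntegral_indicator hT]
  simp [smul_eq_mul, mul_assoc, indicator_mul_right]

theorem setIntegral_ball_norm_rpow_neg {s r : ℝ} (hs : s < dim) (hr : 0 < r) :
    ∫ x in ball 0 r, ‖x‖ ^ (-s) ∂μ =
      dim * μ.real (ball 0 1) * (r ^ (dim - s) / (dim - s)) := by
  have hball : ball (0 : F) r = norm ⁻¹' Iio r := by ext; simp
  rw [hball, setIntegral_preimage_norm (fun t => t ^ (-s)) measurableSet_Iio, Ioi_inter_Iio,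
    setIntegral_congr_fun measurableSet_Ioo
      fun t ht => Real.rpow_pred_mul_rpow_neg Module.finrank_pos ht.1 s,
    ← integral_Ioc_eq_integral_Ioo, ← intervalIntegral.integral_of_le hr.le,
    integral_rpow (Or.inl (by linarith)), Real.zero_rpow (by linarith)]
  ring_nf

theorem setIntegral_compl_ball_norm_rpow_neg {s r : ℝ} (hs : dim < s) (hr : 0 < r) :
    ∫ x in (ball 0 r)ᶜ, ‖x‖ ^ (-s) ∂μ =
      dim * μ.real (ball 0 1) * (r ^ (dim - s) / (s - dim)) := by
  have hball : (ball (0 : F) r)ᶜ = norm ⁻¹' Ici r := by ext; simp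
  rw [hball, setIntegral_preimage_norm (fun t => t ^ (-s)) measurableSet_Ici,
    inter_eq_right.2 (Ici_subset_Ioi.2 hr),
    setIntegral_congr_fun measurableSet_Ici
      fun t ht => Real.rpow_pred_mul_rpow_neg Module.finrank_pos (hr.trans_le ht) s,
    integral_Ici_eq_integral_Ioi, integral_Ioi_rpow_of_lt (by linarith) hr,
    show dim - 1 - s + 1 = dim - s by ring, show s - dim = -(dim - s) by ring, div_neg, neg_div]

theorem integrableOn_ball_norm_rpow_neg {s : ℝ} (hs : s < dim) (r : ℝ) :
    IntegrableOn (fun x => ‖x‖ ^ (-s)) (ball 0 r) μ :=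
  integrableOn_ball_of_norm_le_rpow (C := 1) Module.finrank_pos hs
    (ae_of_all _ fun x => by simp [abs_of_nonneg (Real.rpow_nonneg (norm_nonneg x) _)])
    (measurable_norm.pow_const _).aestronglyMeasurable

theorem integrableOn_compl_ball_norm_rpow_neg {s r : ℝ} (hs : dim < s) (hr : 0 < r) :
    IntegrableOn (fun x => ‖x‖ ^ (-s)) (ball 0 r)ᶜ μ := by
  refine Integrable.of_integral_ne_zero ?_
  have hV : 0 < μ.real (ball (0 : F) 1) :=
    ENNReal.toReal_pos (measure_ball_pos μ 0 one_pos).ne' measure_ball_lt_top.ne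
  have hdim : (0 : ℝ) < dim := by exact_mod_cast Module.finrank_pos
  have hsd : 0 < s - dim := by linarith
  rw [setIntegral_compl_ball_norm_rpow_neg hs hr]
  positivity

theorem abs_setIntegral_le_of_near_far {Ω : Set F} (hΩ : MeasurableSet Ω) {f : F → ℝ} {x : F}
    {r a b : ℝ} (hr : 0 < r) (ha : 0 ≤ a) (hb : 0 ≤ b)
    (hnear : ∀ y ∈ Ω, ‖y - x‖ < r → |f y| ≤ a * ‖y - x‖ ^ (-(dim - 1)))
    (hfar : ∀ y ∈ Ω, r ≤ ‖y - x‖ → |f y| ≤ b * ‖y - x‖ ^ (-(dim + 1))) :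
    |∫ y in Ω, f y ∂μ| ≤ dim * μ.real (ball 0 1) * (a * r + b / r) := by
  classical
  set G : F → ℝ := (ball 0 r).piecewise (fun z => a * ‖z‖ ^ (-(dim - 1)))
    (fun z => b * ‖z‖ ^ (-(dim + 1))) with hG
  have hGint : Integrable G μ :=
    .piecewise measurableSet_ball ((integrableOn_ball_norm_rpow_neg (by linarith) r).const_mul a)
      ((integrableOn_compl_ball_norm_rpow_neg (by linarith) hr).const_mul b)
  have hGnonneg : ∀ z, 0 ≤ G z := fun z => by
    by_cases hz : z ∈ ball 0 r <;> simp only [hG, piecewise, hz] <;> positivity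
  have hFG : ∀ y ∈ Ω, ‖f y‖ ≤ G (y - x) := fun y hy => by
    by_cases hyx : ‖y - x‖ < r
    · simpa [hG, hyx] using hnear y hy hyx
    · simpa [hG, hyx] using hfar y hy (not_lt.1 hyx)
  calc |∫ y in Ω, f y ∂μ| ≤ ∫ y in Ω, G (y - x) ∂μ :=
        norm_integral_le_of_norm_le (hGint.comp_sub_right x).integrableOn
          (ae_restrict_of_forall_mem hΩ hFG)
    _ ≤ ∫ y, G (y - x) ∂μ :=
        setIntegral_le_integral (hGint.comp_sub_right x) (ae_of_all _ fun y => hGnonneg _)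
    _ = ∫ z, G z ∂μ := integral_sub_right_eq_self G x
    _ = dim * μ.real (ball 0 1) * (a * r + b / r) := by
        rw [hG, integral_piecewise measurableSet_ball
          ((integrableOn_ball_norm_rpow_neg (by linarith) r).const_mul a)
          ((integrableOn_compl_ball_norm_rpow_neg (by linarith) hr).const_mul b),
          integral_const_mul, integral_const_mul,
          setIntegral_ball_norm_rpow_neg (by linarith) hr,
          setIntegral_compl_ball_norm_rpow_neg (by linarith) hr]
        rw [show dim - (dim - 1) = 1 by ring, show dim - (dim + 1) = -1 by ring,
          show dim + 1 - dim = 1 by ring, Real.rpow_one, Real.rpow_neg_one]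
        ring

end MeasureTheory

section KernelIntegrand

variable {d : ℕ} {C₀ ε B : ℝ} {K : E d → E d → ℝ} {g : E d → ℝ} {x y : E d}

theorem abs_kernel_mul_sub_le_near (hC₀ : 0 ≤ C₀) (hB : 0 ≤ B)
    (hK : x ≠ y → |K x y| ≤ C₀ * min (dist x y ^ (-(d : ℝ)))
      (ε * dist x y ^ (-(d : ℝ) - 1) * Real.log (dist x y / ε + 2)))
    (hg : |g y - g x| ≤ B * ‖y - x‖) :
    |K x y * (g y - g x)| ≤ C₀ * B * ‖y - x‖ ^ (-((d : ℝ) - 1)) := by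
  rcases eq_or_ne x y with rfl | hxy
  · simp only [sub_self, mul_zero, abs_zero]
    positivity
  have hdist : dist x y = ‖y - x‖ := by rw [dist_comm, dist_eq_norm]
  have hpos : 0 < ‖y - x‖ := hdist ▸ dist_pos.2 hxy
  rw [hdist] at hK
  calc |K x y * (g y - g x)| = |K x y| * |g y - g x| := abs_mul _ _
    _ ≤ (C₀ * ‖y - x‖ ^ (-(d : ℝ))) * (B * ‖y - x‖) :=
        mul_le_mul ((hK hxy).trans (by gcongr; exact min_le_left _ _)) hg (abs_nonneg _)
          (by positivity)
    _ = C₀ * B * ‖y - x‖ ^ (-((d : ℝ) - 1)) := by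
        rw [show -((d : ℝ) - 1) = -d + 1 by ring, Real.rpow_add_one hpos.ne']
        ring

theorem abs_kernel_mul_sub_le_far {M : ℝ} (hC₀ : 0 ≤ C₀) (hε : 0 < ε) (hε1 : ε ≤ 1)
    (hM : dist x y ≤ M)
    (hK : |K x y| ≤ C₀ * min (dist x y ^ (-(d : ℝ)))
      (ε * dist x y ^ (-(d : ℝ) - 1) * Real.log (dist x y / ε + 2)))
    (hg : ∀ z, |g z| ≤ B) :
    |K x y * (g y - g x)| ≤
      2 * C₀ * B * ε * (Real.log (M + 2) + |Real.log ε|) * ‖y - x‖ ^ (-((d : ℝ) + 1)) := by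
  have hdist : dist x y = ‖y - x‖ := by rw [dist_comm, dist_eq_norm]
  rw [hdist] at hK hM
  have hlog : Real.log (‖y - x‖ / ε + 2) ≤ Real.log (M + 2) + |Real.log ε| :=
    (Real.log_div_add_two_le (norm_nonneg _) hε hε1).trans (by gcongr)
  have hlogM : 0 ≤ Real.log (M + 2) := Real.log_nonneg (by linarith [norm_nonneg (y - x)])
  have hgdiff : |g y - g x| ≤ 2 * B := by
    linarith [abs_sub (g y) (g x), hg y, hg x]
  calc |K x y * (g y - g x)| = |K x y| * |g y - g x| := abs_mul _ _
    _ ≤ C₀ * (ε * ‖y - x‖ ^ (-(d : ℝ) - 1) * (Real.log (M + 2) + |Real.log ε|)) * (2 * B) :=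
        mul_le_mul (hK.trans (by gcongr; exact (min_le_right _ _).trans (by gcongr))) hgdiff
          (abs_nonneg _) (by positivity)
    _ = 2 * C₀ * B * ε * (Real.log (M + 2) + |Real.log ε|) *
          ‖y - x‖ ^ (-((d : ℝ) + 1)) := by
        rw [show -((d : ℝ) + 1) = -d - 1 by ring]
        ring

theorem abs_setIntegral_kernel_mul_sub_le {Ω : Set (E d)} {M : ℝ} (hd : 1 ≤ d)
    (hΩ : MeasurableSet Ω) (hΩb : IsBounded Ω) (hdiam : diam Ω ≤ M) (hx : x ∈ Ω)
    (hC₀ : 0 ≤ C₀) (hε : 0 < ε) (hε1 : ε ≤ 1) (hB : 0 ≤ B)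
    (hK : ∀ x y : E d, x ≠ y → |K x y| ≤ C₀ * min (dist x y ^ (-(d : ℝ)))
      (ε * dist x y ^ (-(d : ℝ) - 1) * Real.log (dist x y / ε + 2)))
    (hLip : ∀ y, |g y - g x| ≤ B * ‖y - x‖) (hg : ∀ z, |g z| ≤ B) :
    |∫ y in Ω, K x y * (g y - g x)|
      ≤ d * (volume : Measure (E d)).real (ball 0 1) * C₀ * B * √ε
        * (1 + 2 * (Real.log (M + 2) + |Real.log ε|)) := by
  have hdim : (Module.finrank ℝ (E d) : ℝ) = d := by rw [finrank_euclideanSpace_fin]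
  have : Nontrivial (E d) :=
    Module.nontrivial_of_finrank_pos (R := ℝ) (by rw [finrank_euclideanSpace_fin]; omega)
  have hr : 0 < √ε := Real.sqrt_pos.2 hε
  have hM : 0 ≤ M := diam_nonneg.trans hdiam
  have hest := abs_setIntegral_le_of_near_far (μ := volume) hΩ
    (f := fun y => K x y * (g y - g x)) hr (a := C₀ * B)
    (b := 2 * C₀ * B * ε * (Real.log (M + 2) + |Real.log ε|))
    (by positivity) (by have := Real.log_nonneg (by linarith : (1 : ℝ) ≤ M + 2); positivity)
    (fun y _ _ => hdim ▸ abs_kernel_mul_sub_le_near hC₀ hB (hK x y) (hLip y))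
    (fun y hy hyx => hdim ▸ abs_kernel_mul_sub_le_far hC₀ hε hε1
      ((dist_le_diam_of_mem hΩb hx hy).trans hdiam)
      (hK x y (by rintro rfl; simp only [sub_self, norm_zero] at hyx; linarith)) hg)
  refine (hdim ▸ hest).trans (le_of_eq ?_)
  rw [mul_div_right_comm _ (Real.log (M + 2) + |Real.log ε|), mul_div_assoc _ ε, Real.div_sqrt]
  ring

end KernelIntegrand

/-- If |K_ε(x,y)| ≤ C₀ min{|x−y|^{−d}, ε|x−y|^{−d−1}ln(|x−y|/ε+2)} and
S_ε(1) = 0, so that S_ε(g)(x) = ∫_Ω K_ε(x,y)(g(y) − g(x)) dy, then for g ∈ C¹ and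
0 < ε < 1/2, ‖S_ε(g)‖_{L^∞(Ω)} ≤ C√ε|ln ε|‖g‖_{C¹}. -/
theorem stmt_19 (d : ℕ) (hd : 1 ≤ d) (C₀ M : ℝ) (hC₀ : 0 < C₀) (hM : 0 < M) :
    ∃ C : ℝ, 0 < C ∧
      ∀ (Ω : Set (E d)) (ε B : ℝ) (K : E d → E d → ℝ) (S g : E d → ℝ),
      MeasurableSet Ω → IsBounded Ω → Metric.diam Ω ≤ M → 0 < ε → ε < 1 / 2 →
      0 ≤ B →
      (∀ x y : E d, x ≠ y → |K x y|
        ≤ C₀ * min ((dist x y) ^ (-(d : ℝ)))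
            (ε * (dist x y) ^ (-(d : ℝ) - 1) * Real.log (dist x y / ε + 2))) →
      ContDiff ℝ 1 g → (∀ x, |g x| ≤ B) → (∀ x, ‖fderiv ℝ g x‖ ≤ B) →
      -- S_ε(g)(x) = p.v. ∫_Ω K_ε(x,y) g(y) dy with S_ε(1) = 0
      (∀ x ∈ Ω, S x = ∫ y in Ω, K x y * (g y - g x)) →
      ∀ x ∈ Ω, |S x| ≤ C * Real.sqrt ε * |Real.log ε| * B := by
  set V := (volume : Measure (E d)).real (ball 0 1)
  set c := (1 + 2 * Real.log (M + 2)) / Real.log 2 + 2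
  have hV : 0 < V := ENNReal.toReal_pos (measure_ball_pos _ 0 one_pos).ne' measure_ball_lt_top.ne
  have hc : 0 < c := by
    have := Real.log_pos one_lt_two
    have := Real.log_nonneg (by linarith : (1 : ℝ) ≤ M + 2)
    positivity
  refine ⟨d * V * C₀ * c, by positivity, ?_⟩
  intro Ω ε B K S g hΩ hΩb hdiam hε hε2 hB hK hg hgB hdg hS x hx
  have hLip : ∀ y, |g y - g x| ≤ B * ‖y - x‖ := fun y =>
    Convex.norm_image_sub_le_of_norm_fderiv_le
      (fun z _ => (hg.differentiable one_ne_zero).differentiableAt) (fun z _ => hdg z)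
      convex_univ trivial trivial
  rw [hS x hx]
  calc _ ≤ d * V * C₀ * B * √ε * (1 + 2 * (Real.log (M + 2) + |Real.log ε|)) :=
        abs_setIntegral_kernel_mul_sub_le hd hΩ hΩb hdiam hx hC₀.le hε (by linarith) hB hK
          hLip hgB
    _ ≤ d * V * C₀ * B * √ε * (c * |Real.log ε|) := by
        gcongr
        exact Real.one_add_two_mul_log_add_abs_log_le hM.le hε hε2.le
    _ = d * V * C₀ * c * √ε * |Real.log ε| * B := by ring
end
end
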